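/- The curves r(τ) = e^{iτ} and h(τ) = e^{iτ}(-c sec 2τ + i) (in complex notation for ℝ²), with c ∈ ℝ and cos 2τ ≠ 0, satisfy the system r' = c sec(2τ) r + h and h' = -[1 + c(c + 2 sin 2τ) sec²(2τ)] r - c sec(2τ) h, and moreover the determinant [r, h] (i.e. Im(r̄h)) equals 1 for all τ. -/

import Mathlib

/-!
Write `s τ = c / cos 2τ`, so that `r = e^{iτ}` and `h = r (i - s)`. Since `r' = i r`, the first
equation is `i r = s r + r (i - s)`, and differentiating `h` gives
`h' = r (-1 - i s - s') = -(1 + s² + s') r - s h`; the coefficient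
`1 + s² + s'` is `1 + c (c + 2 sin 2τ) / cos² 2τ`. As `|r| = 1`, `Im (r̄ h) = Im (i - s) = 1`.
-/

open Complex

theorem hasDerivAt_cexp_ofReal_mul_I (τ : ℝ) :
    HasDerivAt (fun t : ℝ => cexp (t * I)) (cexp (τ * I) * I) τ := by
  have : HasDerivAt (fun t : ℝ => (t : ℂ) * I) I τ := by
    simpa using (hasDerivAt_id τ).ofReal_comp.mul_const I
  exact this.cexp

theorem hasDerivAt_div_cos_two_mul (c : ℝ) {τ : ℝ} (hcos : Real.cos (2 * τ) ≠ 0) :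
    HasDerivAt (fun t => c / Real.cos (2 * t))
      (2 * c * Real.sin (2 * τ) / Real.cos (2 * τ) ^ 2) τ := by
  have hcos' : HasDerivAt (fun t => Real.cos (2 * t)) (-Real.sin (2 * τ) * 2) τ :=
    ((Real.hasDerivAt_cos (2 * τ)).comp τ ((hasDerivAt_id τ).const_mul 2)).congr_deriv (by ring)
  refine ((hasDerivAt_const τ c).div hcos' hcos).congr_deriv ?_
  field_simp
  ring

theorem hasDerivAt_cexp_ofReal_mul_I_mul_neg_add_I {s : ℝ → ℝ} {s' τ : ℝ}
    (hs : HasDerivAt s s' τ) :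
    HasDerivAt (fun t : ℝ => cexp (t * I) * (-(s t : ℂ) + I))
      (-((1 + s τ ^ 2 + s' : ℝ) * cexp (τ * I)) - s τ * (cexp (τ * I) * (-(s τ : ℂ) + I)))
      τ := by
  have hfactor : HasDerivAt (fun t : ℝ => -(s t : ℂ) + I) (-(s' : ℂ)) τ :=
    hs.ofReal_comp.neg.add_const I
  refine ((hasDerivAt_cexp_ofReal_mul_I τ).mul hfactor).congr_deriv ?_
  push_cast
  linear_combination (cexp (τ * I)) * I_sq

theorem im_conj_cexp_mul_I_mul (τ : ℝ) (z : ℂ) :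
    (starRingEnd ℂ (cexp (τ * I)) * (cexp (τ * I) * z)).im = z.im := by
  rw [← mul_assoc, ← exp_conj, ← exp_add, map_mul, conj_ofReal, conj_I]
  simp

/-- the curves `r(τ) = e^{iτ}` and `h(τ) = e^{iτ}(-c sec 2τ + i)`
satisfy `r' = c sec(2τ) r + h`,
`h' = -[1 + c(c + 2 sin 2τ) sec²(2τ)] r - c sec(2τ) h`, and the determinant
`[r, h] = Im(r̄ h)` equals `1`, wherever `cos 2τ ≠ 0`. -/
theorem stmt19 (c : ℝ) (r w : ℝ → ℂ)
    (hr : ∀ τ, r τ = Complex.exp ((τ : ℂ) * Complex.I))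
    (hw : ∀ τ, w τ = Complex.exp ((τ : ℂ) * Complex.I)
      * (-(((c / Real.cos (2 * τ) : ℝ)) : ℂ) + Complex.I)) :
    ∀ τ : ℝ, Real.cos (2 * τ) ≠ 0 →
      deriv r τ = ((c / Real.cos (2 * τ) : ℝ) : ℂ) * r τ + w τ ∧
      deriv w τ =
        -((((1 + c * (c + 2 * Real.sin (2 * τ)) / (Real.cos (2 * τ)) ^ 2 : ℝ)) : ℂ)
            * r τ)
          - ((c / Real.cos (2 * τ) : ℝ) : ℂ) * w τ ∧
      ((starRingEnd ℂ) (r τ) * w τ).im = 1 := by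
  intro τ hcos
  rw [funext hr, funext hw]
  have hcoeff : 1 + (c / Real.cos (2 * τ)) ^ 2 + 2 * c * Real.sin (2 * τ) / Real.cos (2 * τ) ^ 2
      = 1 + c * (c + 2 * Real.sin (2 * τ)) / Real.cos (2 * τ) ^ 2 := by
    field_simp
    ring
  refine ⟨?_, ?_, ?_⟩
  · rw [(hasDerivAt_cexp_ofReal_mul_I τ).deriv]
    ring
  · rw [(hasDerivAt_cexp_ofReal_mul_I_mul_neg_add_I (hasDerivAt_div_cos_two_mul c hcos)).deriv,
      hcoeff]
  · rw [im_conj_cexp_mul_I_mul, add_im, neg_im, ofReal_im, I_im]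
    norm_num
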